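/- arXiv:1807.09710 — 5 statements merged into one kernel-verified Lean document; each statement's English description precedes it below -/
import Mathlib

section
/- If π is a set partition of [k] and π^c its complement, then the number of set partitions of [n] avoiding π equals the number avoiding π^c. -/
/-! Reversing `[n]` is an involution on set partitions of `[n]`, and since it reverses the order
it carries an increasing occurrence of `π` in `σ` to an increasing occurrence of `π^c` in `σ^c`.
So it restricts to a bijection between the partitions avoiding `π` and those avoiding `π^c`. -/

/-- The set partition `σ` of `[n]` (as an equivalence relation on `Fin n`)
contains the pattern `π` (a set partition of `[k]`): some increasing choice of
`k` elements of `[n]` has the same same-block relation as `π`. -/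
def SContains {n k : ℕ} (σ : Setoid (Fin n)) (π : Setoid (Fin k)) : Prop :=
  ∃ f : Fin k → Fin n, StrictMono f ∧ ∀ a b : Fin k, σ.r (f a) (f b) ↔ π.r a b

/-- The set partition associated to an RGF word: `i` and `j` are in the same
block iff the letters agree. -/
def pat (l : List ℕ) : Setoid (Fin l.length) := Setoid.ker l.get

open Function

theorem Setoid.comap_involutive {α : Type*} {g : α → α} (hg : Involutive g) :
    Involutive (Setoid.comap g) := by
  intro r
  ext x y
  simp only [Setoid.comap_rel, hg _]

theorem SContains.comap_rev {n k : ℕ} {σ : Setoid (Fin n)} {π : Setoid (Fin k)}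
    (h : SContains σ π) : SContains (σ.comap Fin.rev) (π.comap Fin.rev) := by
  obtain ⟨f, hf, hrel⟩ := h
  refine ⟨fun a => (f a.rev).rev, fun a b hab => ?_, fun a b => ?_⟩
  · exact Fin.rev_lt_rev.mpr (hf (Fin.rev_lt_rev.mpr hab))
  · simpa only [Setoid.comap_rel, Fin.rev_rev] using hrel a.rev b.rev

theorem sContains_comap_rev_iff {n k : ℕ} (σ : Setoid (Fin n)) (π : Setoid (Fin k)) :
    SContains (σ.comap Fin.rev) (π.comap Fin.rev) ↔ SContains σ π := by
  refine ⟨fun h => ?_, SContains.comap_rev⟩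
  have hrev := h.comap_rev
  rwa [Setoid.comap_involutive Fin.rev_rev, Setoid.comap_involutive Fin.rev_rev] at hrev

theorem stmt3 (k n : ℕ) (π : Setoid (Fin k)) :
    Nat.card {σ : Setoid (Fin n) // ¬ SContains σ π} =
    Nat.card {σ : Setoid (Fin n) // ¬ SContains σ (Setoid.comap Fin.rev π)} := by
  exact Nat.card_congr <| (Involutive.toPerm _ (Setoid.comap_involutive Fin.rev_rev)).subtypeEquiv
    fun σ => not_congr (sContains_comap_rev_iff σ π).symm
end

section
/- A set partition σ of [n] avoids the pattern 1/234 if and only if its RGF w has the form uv, where u = 1^{a_1}2 (a block of 1s followed by a single 2, or u is all 1s when m=1), and in the suffix v the letter 2 appears at most once more and every other letter i (i = 1 or i ≥ 3) appears at most twice. -/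
/-! An occurrence of `1/234` is a subsequence `y x x x` with `y ≠ x`. Unless `w` is all `1`s,
the RGF condition forces `w = 1^m 2 v` with `m ≥ 1`. A letter occurring three times in `2 v`
gives an occurrence, preceded by the `2`, or by a `1` when the letter is `2`. Conversely, in an
occurrence one of `x ≠ y` is not `1`, so all three copies of `x` lie in `2 v`. -/

/-- `w` is a restricted growth function: each letter is at least 1 and at most
one more than the maximum of the preceding letters (so the first letter is 1). -/
def IsRGF (w : List ℕ) : Prop :=
  ∀ i : Fin w.length, 1 ≤ w.get i ∧ w.get i ≤ ((w.take i.1).foldr max 0) + 1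

/-- left-smaller statistic -/
def lsStat (w : List ℕ) : ℕ :=
  ∑ i : Fin w.length, ((w.take i.1).toFinset.filter (fun v => v < w.get i)).card

/-- left-bigger statistic -/
def lbStat (w : List ℕ) : ℕ :=
  ∑ i : Fin w.length, ((w.take i.1).toFinset.filter (fun v => w.get i < v)).card

/-- right-smaller statistic -/
def rsStat (w : List ℕ) : ℕ :=
  ∑ i : Fin w.length, ((w.drop (i.1 + 1)).toFinset.filter (fun v => v < w.get i)).card

/-- right-bigger statistic -/
def rbStat (w : List ℕ) : ℕ :=
  ∑ i : Fin w.length, ((w.drop (i.1 + 1)).toFinset.filter (fun v => w.get i < v)).card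

/-- The word `w` (viewed as a set partition via block indices) contains the
pattern given by the RGF `p`: some subsequence of `w` has the same
same-block (equal-letter) relation as `p`. -/
def WContains (p w : List ℕ) : Prop :=
  ∃ f : Fin p.length → Fin w.length, StrictMono f ∧
    ∀ a b : Fin p.length, w.get (f a) = w.get (f b) ↔ p.get a = p.get b

namespace List

variable {α : Type*}

theorem cons_sublist_append_iff_of_not_mem {a : α} {l A B : List α} (ha : a ∉ A) :
    a :: l <+ A ++ B ↔ a :: l <+ B := by
  refine ⟨fun h => ?_, fun h => h.trans (sublist_append_right A B)⟩
  induction A with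
  | nil => simpa using h
  | cons c A ih =>
    rcases sublist_cons_iff.1 h with h | ⟨r, hr, -⟩
    · exact ih (fun hA => ha (mem_cons_of_mem c hA)) h
    · exact absurd (mem_cons.2 (.inl (cons_eq_cons.1 hr).1)) ha

variable [BEq α] [LawfulBEq α]

theorem forall_count_cons_le_two_iff {b : α} {v : List α} :
    (∀ x, (b :: v).count x ≤ 2) ↔ v.count b ≤ 1 ∧ ∀ x, x ≠ b → v.count x ≤ 2 := by
  refine ⟨fun h => ⟨?_, fun x hx => ?_⟩, fun ⟨hb, h⟩ x => ?_⟩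
  · simpa using h b
  · simpa [count_cons, Ne.symm hx] using h x
  · by_cases hx : x = b
    · subst hx; simpa using hb
    · simpa [count_cons, Ne.symm hx] using h x hx

theorem not_exists_sublist_of_forall_count_le_two {c b : α} {m : ℕ} {v : List α}
    (hv : ∀ x, (b :: v).count x ≤ 2) :
    ¬ ∃ x y, y ≠ x ∧ [y, x, x, x] <+ replicate m c ++ b :: v := by
  rintro ⟨x, y, hne, hsub⟩
  have hxxx : replicate 3 x <+ b :: v := by
    by_cases hyc : y = c
    · have hx : x ∉ replicate m c := fun h => hne (hyc.trans (eq_of_mem_replicate h).symm)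
      exact (cons_sublist_append_iff_of_not_mem hx).1 (sublist_of_cons_sublist hsub)
    · have hy : y ∉ replicate m c := fun h => hyc (eq_of_mem_replicate h)
      exact sublist_of_cons_sublist ((cons_sublist_append_iff_of_not_mem hy).1 hsub)
  exact (hv x).not_gt (replicate_sublist_iff.1 hxxx)

theorem exists_sublist_of_three_le_count {c b x : α} {m : ℕ} {v : List α} (hm : 0 < m)
    (hcb : c ≠ b) (hx : 3 ≤ (b :: v).count x) :
    ∃ x y, y ≠ x ∧ [y, x, x, x] <+ replicate m c ++ b :: v := by
  by_cases hxb : x = b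
  · subst hxb
    have hc : [c] <+ replicate m c := by simp [hm.ne']
    exact ⟨x, c, hcb, hc.append (replicate_sublist_iff.2 hx)⟩
  · have hxv : replicate 3 x <+ v :=
      replicate_sublist_iff.2 (by simpa [count_cons, Ne.symm hxb] using hx)
    exact ⟨x, b, Ne.symm hxb, (hxv.cons_cons b).trans (sublist_append_right _ _)⟩

end List

open List

theorem wcontains_one_two_two_two_iff (w : List ℕ) :
    WContains [1, 2, 2, 2] w ↔ ∃ x y, y ≠ x ∧ [y, x, x, x] <+ w := by
  constructor
  · rintro ⟨f, hf, hiff⟩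
    refine ⟨w.get (f 1), w.get (f 0), fun h => by simpa using (hiff 0 1).1 h, ?_⟩
    refine sublist_iff_exists_fin_orderEmbedding_get_eq.2 ⟨OrderEmbedding.ofStrictMono f hf, ?_⟩
    intro i
    fin_cases i
    · rfl
    · rfl
    · exact (hiff 1 2).2 rfl
    · exact (hiff 1 3).2 rfl
  · rintro ⟨x, y, hne, hsub⟩
    obtain ⟨f, hf⟩ := sublist_iff_exists_fin_orderEmbedding_get_eq.1 hsub
    refine ⟨f, f.strictMono, fun a b => ?_⟩
    rw [← hf a, ← hf b]
    fin_cases a <;> fin_cases b <;> simp [hne, hne.symm]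

theorem IsRGF.one_le_and_le_foldr_max_add_one {l r : List ℕ} {b : ℕ}
    (hw : IsRGF (l ++ b :: r)) :
    1 ≤ b ∧ b ≤ l.foldr max 0 + 1 := by
  simpa using hw ⟨l.length, by simp⟩

theorem IsRGF.exists_eq_replicate_one_append_two {w : List ℕ} (hw : IsRGF w)
    (h : ∃ x ∈ w, x ≠ 1) : ∃ m v, 0 < m ∧ w = replicate m 1 ++ 2 :: v := by
  obtain ⟨b, hfind⟩ := Option.isSome_iff_exists.1 (find?_isSome.2 (by simpa using h) :
    (w.find? (· != 1)).isSome)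
  obtain ⟨hb, l, r, rfl, hl⟩ := find?_eq_some_iff_append.1 hfind
  have hl1 : ∀ a ∈ l, a = 1 := by simpa using hl
  obtain ⟨h1b, hb2⟩ := hw.one_le_and_le_foldr_max_add_one
  have hmax : l.foldr max 0 ≤ 1 := max_le_of_forall_le l 1 fun a ha => (hl1 a ha).le
  simp only [bne_iff_ne, ne_eq] at hb
  refine ⟨l.length, r, length_pos_iff.2 ?_, ?_⟩
  · rintro rfl
    simp only [foldr_nil, zero_add] at hb2
    omega
  · rw [eq_replicate_length.2 hl1, length_replicate, show b = 2 by omega]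

theorem stmt8 (w : List ℕ) (hw : IsRGF w) :
    ¬ WContains [1, 2, 2, 2] w ↔
      ((∀ x ∈ w, x = 1) ∨
        ∃ a v : List ℕ, ∃ a₁ : ℕ, a = List.replicate a₁ 1 ∧
          w = a ++ [2] ++ v ∧ v.count 2 ≤ 1 ∧ ∀ i : ℕ, i ≠ 2 → v.count i ≤ 2) := by
  rw [wcontains_one_two_two_two_iff]
  constructor
  · intro hfree
    by_cases hall : ∀ x ∈ w, x = 1
    · exact .inl hall
    obtain ⟨m, v, hm, rfl⟩ := hw.exists_eq_replicate_one_append_two (by simpa using hall)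
    refine .inr ⟨_, v, m, rfl, by simp, forall_count_cons_le_two_iff.1 fun x => ?_⟩
    by_contra! hx
    exact hfree (exists_sublist_of_three_le_count hm (by decide) hx)
  · rintro (hall | ⟨_, v, m, rfl, rfl, h2, hv⟩)
    · rintro ⟨x, y, hne, hsub⟩
      exact hne ((hall y (hsub.subset (by simp))).trans (hall x (hsub.subset (by simp))).symm)
    · simpa using not_exists_sublist_of_forall_count_le_two
        (forall_count_cons_le_two_iff.2 ⟨h2, hv⟩) (c := 1) (m := m)
end

section
/- A set partition σ of [n] avoids the pattern 123/4 if and only if its RGF w has the form uv where every letter occurs at most twice in u, and v is a (possibly empty) terminal block consisting of repeated copies of a single letter (beginning at the third occurrence of that letter). -/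
/-! A pattern `a a a b` with `a ≠ b` is exactly a third occurrence of a letter followed later by a
different letter. So cut the word just before the first third occurrence of any letter: the prefix
has every letter at most twice, and an avoiding word can only repeat that letter afterwards.
Conversely, if such a pattern sat in `u ++ v` with `v` constant, three copies of `a` cannot all lie
in `u`, so one lies in `v` together with `b`, forcing `a = b`. -/

namespace List

variable {α : Type*} [BEq α] [LawfulBEq α]

theorem forall_count_le_or_eq_append_cons (n : ℕ) (w : List α) :
    (∀ a, w.count a ≤ n) ∨
      ∃ u a v, w = u ++ a :: v ∧ u.count a = n ∧ ∀ b, u.count b ≤ n := by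
  induction w using List.reverseRecOn with
  | nil => simp
  | append_singleton w a ih =>
    rcases ih with hw | ⟨u, b, v, rfl, hub, hu⟩
    · by_cases hwa : w.count a = n
      · exact Or.inr ⟨w, a, [], rfl, hwa, hw⟩
      · refine Or.inl fun b => ?_
        rw [count_append, count_singleton]
        have := hw b
        split_ifs with hab
        · obtain rfl := eq_of_beq hab
          omega
        · omega
    · exact Or.inr ⟨u, b, v ++ [a], by simp, hub, hu⟩

theorem not_sublist_append_of_count_le_two {u v : List α} {c z y : α}
    (hu : ∀ a, u.count a ≤ 2) (hv : ∀ x ∈ v, x = c) (hzy : z ≠ y) :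
    ¬ [z, z, z, y] <+ u ++ v := by
  intro hsub
  obtain ⟨l₁, l₂, hl, h₁, h₂⟩ := sublist_append_iff.mp hsub
  have hl₂ : ∀ x ∈ l₂, x = c := fun x hx => hv x (h₂.subset hx)
  have hz : z ∈ l₂ := by
    by_contra hz
    have hl₁ : l₁.count z = 3 := by
      simpa [count_eq_zero.mpr hz, hzy.symm] using (congrArg (count z) hl).symm
    have := h₁.count_le z
    have := hu z
    omega
  have hl₂ne : l₂ ≠ [] := ne_nil_of_mem hz
  have hy : y ∈ l₂ := by
    have hlast : l₂.getLast hl₂ne = y := by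
      rw [← getLast_append_of_ne_nil (l := l₁) (by simp [hl₂ne]) hl₂ne]
      simp [← hl]
    exact hlast ▸ getLast_mem hl₂ne
  exact hzy ((hl₂ z hz).trans (hl₂ y hy).symm)

end List

open List in
theorem wContains_1112_iff (w : List ℕ) :
    WContains [1, 1, 1, 2] w ↔ ∃ z y, z ≠ y ∧ [z, z, z, y] <+ w := by
  simp only [WContains, sublist_iff_exists_fin_orderEmbedding_get_eq]
  constructor
  · rintro ⟨f, hf, hiff⟩
    refine ⟨w.get (f 0), w.get (f 3), fun h => by simpa using (hiff 0 3).mp h,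
      OrderEmbedding.ofStrictMono f hf, fun ix => ?_⟩
    fin_cases ix
    · rfl
    · exact (hiff 0 1).mpr rfl
    · exact (hiff 0 2).mpr rfl
    · rfl
  · rintro ⟨z, y, hzy, f, hf⟩
    refine ⟨f, f.strictMono, fun a b => ?_⟩
    rw [← hf, ← hf]
    fin_cases a <;> fin_cases b <;> simp [hzy, hzy.symm]

theorem stmt9_general (w : List ℕ) :
    ¬ WContains [1, 1, 1, 2] w ↔
      ∃ u v : List ℕ, w = u ++ v ∧ (∀ i : ℕ, u.count i ≤ 2) ∧
        ∃ z : ℕ, ∀ x ∈ v, x = z := by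
  rw [wContains_1112_iff]
  constructor
  · intro havoid
    rcases List.forall_count_le_or_eq_append_cons 2 w with hw | ⟨u, z, v, rfl, huz, hu⟩
    · exact ⟨w, [], by simp, hw, 0, by simp⟩
    refine ⟨u, z :: v, rfl, hu, z, fun x hx => ?_⟩
    by_contra hxz
    refine havoid ⟨z, x, Ne.symm hxz, ?_⟩
    have hzz : (List.replicate 2 z).Sublist u := List.replicate_sublist_iff.mpr huz.ge
    exact hzz.append ((List.singleton_sublist.mpr (List.mem_of_ne_of_mem hxz hx)).cons_cons z)
  · rintro ⟨u, v, rfl, hu, c, hv⟩ ⟨z, y, hzy, hsub⟩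
    exact List.not_sublist_append_of_count_le_two hu hv hzy hsub

theorem stmt9 (w : List ℕ) (hw : IsRGF w) :
    ¬ WContains [1, 1, 1, 2] w ↔
      ∃ u v : List ℕ, w = u ++ v ∧ (∀ i : ℕ, u.count i ≤ 2) ∧
        ∃ z : ℕ, ∀ x ∈ v, x = z :=
  stmt9_general w
end

section
/- The number of set partitions of [n] (n ≥ 2) avoiding both patterns 12/3 and 1/24/3 is 2(n−1). -/
/-!
In a partition avoiding `12/3`, once a letter `j` shares a block with an earlier letter `i` (take
`j` least), every later letter joins that block; so the partition consists of the block
`{i} ∪ [j, n)` and singletons. Avoiding `1/24/3` then forces `i = 0` or `j = i + 1`, since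
otherwise `i - 1, i, i + 1, j` is an occurrence. This leaves the `n` partitions with block
`[m, n)` (`m = n - 1` giving the discrete partition) and the `n - 2` with block `{0} ∪ [m, n)`,
`2 ≤ m < n`.
-/

theorem sContains_of_lt {n k : ℕ} {σ : Setoid (Fin n)} {π : Setoid (Fin k)} {f : Fin k → Fin n}
    (hf : StrictMono f) (h : ∀ a b, a < b → (σ (f a) (f b) ↔ π a b)) : SContains σ π := by
  refine ⟨f, hf, fun a b => ?_⟩
  rcases lt_trichotomy a b with hab | rfl | hab
  · exact h a b hab
  · exact iff_of_true (σ.refl _) (π.refl _)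
  · rw [σ.comm', π.comm']
    exact h b a hab

theorem pat_rel_iff (l : List ℕ) (a b : Fin l.length) : pat l a b ↔ l.get a = l.get b :=
  Iff.rfl

namespace Setoid

variable {α : Type*}

def ofBlock (s : Set α) : Setoid α where
  r a b := a = b ∨ (a ∈ s ∧ b ∈ s)
  iseqv := by
    refine ⟨fun a => Or.inl rfl, ?_, ?_⟩
    · rintro a b (rfl | ⟨ha, hb⟩)
      exacts [Or.inl rfl, Or.inr ⟨hb, ha⟩]
    · rintro a b c (rfl | hab) (rfl | hbc)
      exacts [Or.inl rfl, Or.inr hbc, Or.inr hab, Or.inr ⟨hab.1, hbc.2⟩]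

theorem ofBlock_rel_iff {s : Set α} {a b : α} : ofBlock s a b ↔ a = b ∨ (a ∈ s ∧ b ∈ s) :=
  Iff.rfl

theorem eq_ofBlock_of_rel_of_ne (σ : Setoid α) (i : α) (h : ∀ a b, σ a b → a ≠ b → σ i a) :
    σ = ofBlock {x | σ i x} := by
  ext a b
  rw [ofBlock_rel_iff]
  constructor
  · intro hab
    by_cases hne : a = b
    · exact Or.inl hne
    · exact Or.inr ⟨h a b hab hne, σ.trans (h a b hab hne) hab⟩
  · rintro (rfl | ⟨ha, hb⟩)
    exacts [σ.refl a, σ.trans (σ.symm ha) hb]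

end Setoid

/-- In restricted growth form this is the word `1 2 ⋯ j (i+1) ⋯ (i+1)` (for `i < j ≤ n`). -/
def pointTailSetoid (n i j : ℕ) : Setoid (Fin n) :=
  Setoid.ofBlock {a | a.val = i ∨ j ≤ a.val}

theorem pointTailSetoid_rel_iff {n i j : ℕ} {a b : Fin n} :
    pointTailSetoid n i j a b ↔ a = b ∨ ((a.val = i ∨ j ≤ a.val) ∧ (b.val = i ∨ j ≤ b.val)) :=
  Iff.rfl

section
variable {n : ℕ}

theorem sContains_pat112_iff (σ : Setoid (Fin n)) :
    SContains σ (pat [1, 1, 2]) ↔ ∃ a b c, a < b ∧ b < c ∧ σ a b ∧ ¬σ a c := by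
  constructor
  · rintro ⟨f, hf, hr⟩
    exact ⟨f 0, f 1, f 2, hf (by decide), hf (by decide), (hr 0 1).2 rfl,
      fun h => absurd ((pat_rel_iff _ _ _).1 ((hr 0 2).1 h)) (by decide)⟩
  · rintro ⟨a, b, c, hab, hbc, hrab, hrac⟩
    have hrbc : ¬σ b c := fun h => hrac (σ.trans hrab h)
    refine sContains_of_lt (f := ![a, b, c]) ?_ fun p q hpq => ?_
    · simp [Fin.strictMono_iff_lt_succ, Fin.forall_fin_succ, hab, hbc]
    · rw [pat_rel_iff]
      fin_cases p <;> fin_cases q <;> simp_all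

theorem sContains_pat1232_iff (σ : Setoid (Fin n)) :
    SContains σ (pat [1, 2, 3, 2]) ↔
      ∃ a b c d, a < b ∧ b < c ∧ c < d ∧ σ b d ∧ ¬σ a b ∧ ¬σ b c ∧ ¬σ a c := by
  constructor
  · rintro ⟨f, hf, hr⟩
    exact ⟨f 0, f 1, f 2, f 3, hf (by decide), hf (by decide), hf (by decide), (hr 1 3).2 rfl,
      fun h => absurd ((pat_rel_iff _ _ _).1 ((hr 0 1).1 h)) (by decide),
      fun h => absurd ((pat_rel_iff _ _ _).1 ((hr 1 2).1 h)) (by decide),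
      fun h => absurd ((pat_rel_iff _ _ _).1 ((hr 0 2).1 h)) (by decide)⟩
  · rintro ⟨a, b, c, d, hab, hbc, hcd, hrbd, hrab, hrbc, hrac⟩
    have hrad : ¬σ a d := fun h => hrab (σ.trans h (σ.symm hrbd))
    have hrcd : ¬σ c d := fun h => hrbc (σ.trans hrbd (σ.symm h))
    refine sContains_of_lt (f := ![a, b, c, d]) ?_ fun p q hpq => ?_
    · simp [Fin.strictMono_iff_lt_succ, Fin.forall_fin_succ, hab, hbc, hcd]
    · rw [pat_rel_iff]
      fin_cases p <;> fin_cases q <;> simp_all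

theorem exists_eq_pointTailSetoid {σ : Setoid (Fin n)}
    (hσ : ∀ a b c, a < b → b < c → σ a b → σ a c) (hne : ∃ a b, a < b ∧ σ a b) :
    ∃ i j : Fin n, i < j ∧ σ = pointTailSetoid n i j := by
  obtain ⟨a₀, b₀, h₀⟩ := hne
  obtain ⟨j, ⟨i, hij, hrij⟩, hmin⟩ := wellFounded_lt.has_min {b | ∃ a < b, σ a b} ⟨b₀, a₀, h₀⟩
  have hj_le : ∀ a b, a < b → σ a b → j ≤ b := fun a b hab h => not_lt.1 (hmin b ⟨a, hab, h⟩)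
  have htail : ∀ k, j ≤ k → σ i k := fun k hk =>
    hk.eq_or_lt.elim (fun h => h ▸ hrij) (hσ i j k hij · hrij)
  have hblock : {x | σ i x} = {x : Fin n | x.val = i ∨ j.val ≤ x.val} := by
    ext x
    simp only [Set.mem_ofPred_eq, ← Fin.ext_iff, ← Fin.le_def]
    refine ⟨fun hx => or_iff_not_imp_left.2 fun hxi => ?_, ?_⟩
    · rcases lt_or_gt_of_ne hxi with h | h
      · exact absurd (hj_le x i h (σ.symm hx)) (not_le.2 hij)
      · exact hj_le i x h hx
    · rintro (rfl | hx)
      exacts [σ.refl x, htail x hx]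
  refine ⟨i, j, hij, ?_⟩
  rw [pointTailSetoid, ← hblock]
  refine σ.eq_ofBlock_of_rel_of_ne i fun a b hab hne => ?_
  rcases lt_or_gt_of_ne hne with h | h
  · exact σ.trans (htail b (hj_le a b h hab)) (σ.symm hab)
  · exact htail a (hj_le b a h (σ.symm hab))

theorem eq_pointTailSetoid_of_forall_not_rel {σ : Setoid (Fin n)} {m : ℕ} (hm : m + 1 = n)
    (hσ : ∀ a b, a < b → ¬σ a b) : σ = pointTailSetoid n m (m + 1) := by
  ext a b
  rw [pointTailSetoid_rel_iff]
  constructor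
  · intro hab
    left
    rcases lt_trichotomy a b with h | h | h
    exacts [absurd hab (hσ a b h), h, absurd (σ.symm hab) (hσ b a h)]
  · rintro (rfl | ⟨ha, hb⟩)
    · exact σ.refl a
    · obtain rfl : a = b := by omega
      exact σ.refl a

theorem pointTailSetoid_not_sContains_pat112 {i j : ℕ} (hij : i < j) :
    ¬SContains (pointTailSetoid n i j) (pat [1, 1, 2]) := by
  rw [sContains_pat112_iff]
  rintro ⟨a, b, c, hab, hbc, hrab, hrac⟩
  simp only [pointTailSetoid_rel_iff] at hrab hrac
  omega

theorem pointTailSetoid_not_sContains_pat1232 {i j : ℕ} (hij : i = 0 ∨ j = i + 1) :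
    ¬SContains (pointTailSetoid n i j) (pat [1, 2, 3, 2]) := by
  rw [sContains_pat1232_iff]
  rintro ⟨a, b, c, d, hab, hbc, hcd, hrbd, hrab, hrbc, hrac⟩
  simp only [pointTailSetoid_rel_iff] at hrbd hrbc hrab
  omega

theorem eq_zero_or_eq_succ_of_not_sContains_pat1232 {i j : ℕ} (hij : i < j) (hjn : j < n)
    (h : ¬SContains (pointTailSetoid n i j) (pat [1, 2, 3, 2])) : i = 0 ∨ j = i + 1 := by
  by_contra! hne
  refine h ((sContains_pat1232_iff _).2
    ⟨⟨i - 1, by omega⟩, ⟨i, by omega⟩, ⟨i + 1, by omega⟩, ⟨j, hjn⟩, ?_⟩)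
  simp [pointTailSetoid_rel_iff, Fin.ext_iff]
  omega

theorem not_sContains_pat112_and_pat1232_iff (hn : 0 < n) (σ : Setoid (Fin n)) :
    (¬SContains σ (pat [1, 1, 2]) ∧ ¬SContains σ (pat [1, 2, 3, 2])) ↔
      (∃ m < n, σ = pointTailSetoid n m (m + 1)) ∨
        (∃ m, (2 ≤ m ∧ m < n) ∧ σ = pointTailSetoid n 0 m) := by
  constructor
  · rintro ⟨h112, h1232⟩
    by_cases hne : ∃ a b, a < b ∧ σ a b
    · have hσ : ∀ a b c, a < b → b < c → σ a b → σ a c := fun a b c hab hbc hr =>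
        by_contra fun h => h112 ((sContains_pat112_iff σ).2 ⟨a, b, c, hab, hbc, hr, h⟩)
      obtain ⟨i, j, hij, rfl⟩ := exists_eq_pointTailSetoid hσ hne
      have hij' := eq_zero_or_eq_succ_of_not_sContains_pat1232 hij j.isLt h1232
      by_cases hj : j.val = i.val + 1
      · exact Or.inl ⟨i, i.isLt, by rw [hj]⟩
      · have hi : i.val = 0 := hij'.resolve_right hj
        exact Or.inr ⟨j, ⟨by omega, j.isLt⟩, by rw [hi]⟩
    · push Not at hne
      exact Or.inl ⟨n - 1, by omega, eq_pointTailSetoid_of_forall_not_rel (by omega) hne⟩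
  · rintro (⟨m, -, rfl⟩ | ⟨m, ⟨hm, -⟩, rfl⟩)
    · exact ⟨pointTailSetoid_not_sContains_pat112 m.lt_succ_self,
        pointTailSetoid_not_sContains_pat1232 (Or.inr rfl)⟩
    · exact ⟨pointTailSetoid_not_sContains_pat112 (by omega),
        pointTailSetoid_not_sContains_pat1232 (Or.inl rfl)⟩

theorem injOn_pointTailSetoid_succ :
    Set.InjOn (fun m => pointTailSetoid n m (m + 1)) (Finset.range n) := by
  intro m hm m' hm' heq
  by_contra hne
  wlog hlt : m < m' generalizing m m'
  · exact this hm' hm heq.symm (Ne.symm hne) (by omega)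
  simp only [Finset.coe_range, Set.mem_Iio] at hm hm'
  have := Setoid.ext_iff.1 heq ⟨m, hm⟩ ⟨n - 1, by omega⟩
  simp [pointTailSetoid_rel_iff, Fin.ext_iff] at this
  omega

theorem injOn_pointTailSetoid_zero : Set.InjOn (pointTailSetoid n 0) (Finset.Ico 2 n) := by
  intro m hm m' hm' heq
  by_contra hne
  wlog hlt : m < m' generalizing m m'
  · exact this hm' hm heq.symm (Ne.symm hne) (by omega)
  simp only [Finset.coe_Ico, Set.mem_Ico] at hm hm'
  have := Setoid.ext_iff.1 heq ⟨0, by omega⟩ ⟨m, hm.2⟩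
  simp [pointTailSetoid_rel_iff, Fin.ext_iff] at this
  omega

theorem disjoint_image_pointTailSetoid [DecidableEq (Setoid (Fin n))] :
    Disjoint ((Finset.range n).image fun m => pointTailSetoid n m (m + 1))
      ((Finset.Ico 2 n).image (pointTailSetoid n 0)) := by
  simp only [Finset.disjoint_left, Finset.mem_image, Finset.mem_range, Finset.mem_Ico]
  rintro _ ⟨m, hm, rfl⟩ ⟨m', hm', heq⟩
  have h0 := Setoid.ext_iff.1 heq ⟨0, by omega⟩ ⟨m', hm'.2⟩
  have h1 := Setoid.ext_iff.1 heq ⟨1, by omega⟩ ⟨m', hm'.2⟩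
  simp [pointTailSetoid_rel_iff, Fin.ext_iff] at h0 h1
  omega

end

theorem stmt11 (n : ℕ) (hn : 2 ≤ n) :
    Nat.card {σ : Setoid (Fin n) //
      ¬ SContains σ (pat [1, 1, 2]) ∧ ¬ SContains σ (pat [1, 2, 3, 2])} =
    2 * (n - 1) := by
  classical
  let A := (Finset.range n).image fun m => pointTailSetoid n m (m + 1)
  let B := (Finset.Ico 2 n).image (pointTailSetoid n 0)
  calc Nat.card {σ : Setoid (Fin n) //
        ¬ SContains σ (pat [1, 1, 2]) ∧ ¬ SContains σ (pat [1, 2, 3, 2])}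
      = Nat.card {σ // σ ∈ A ∪ B} := Nat.card_congr <| Equiv.subtypeEquivRight fun σ => by
        simpa [A, B, eq_comm] using not_sContains_pat112_and_pat1232_iff (by omega) σ
    _ = A.card + B.card := by
        rw [Nat.card_eq_finsetCard, Finset.card_union_of_disjoint disjoint_image_pointTailSetoid]
    _ = 2 * (n - 1) := by
        rw [Finset.card_image_of_injOn injOn_pointTailSetoid_succ,
          Finset.card_image_of_injOn injOn_pointTailSetoid_zero, Finset.card_range, Nat.card_Ico]
        omega
end

section
/- If w ∈ R_n(12/3, 1/24/3) has the form w = ab with a strictly increasing 1 2 ... m and b a nonempty terminal block of 1s, then lb(w) = (m−1)·|b| and rs(w) = |a| − 1; if instead b is a block of m's (possibly empty), then lb(w) = 0 and rs(w) = 0. -/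
/-! Both statistics obey one-letter recursions: appending `x` to `w` raises `lb` by the number
of distinct letters of `w` above `x`, and prepending `x` raises `rs` by the number of distinct
letters after it below `x`. In `1 2 ⋯ m` every letter is a new maximum and sees only larger
letters to its right, so the only contributions come from the trailing block: a block of `1`s
is preceded by the `m - 1` letters above `1` and lies below each of the letters `2, …, m`,
while a block of `m`s contributes nothing. -/

lemma lbStat_eq_sum_range (w : List ℕ) :
    lbStat w = ∑ i ∈ Finset.range w.length,
      ((w.take i).toFinset.filter (fun v => w.getD i 0 < v)).card := by
  rw [lbStat, ← Fin.sum_univ_eq_sum_range]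
  refine Finset.sum_congr rfl fun i _ => ?_
  simp [List.get_eq_getElem]

lemma lbStat_append_singleton (w : List ℕ) (x : ℕ) :
    lbStat (w ++ [x]) = lbStat w + (w.toFinset.filter (fun v => x < v)).card := by
  rw [lbStat_eq_sum_range, lbStat_eq_sum_range, List.length_append, List.length_singleton,
    Finset.sum_range_succ, List.take_left, List.getD_append_right _ _ _ _ le_rfl, Nat.sub_self]
  congr 1
  refine Finset.sum_congr rfl fun i hi => ?_
  have hi : i < w.length := Finset.mem_range.mp hi
  rw [List.take_append_of_le_length hi.le, List.getD_append _ _ _ _ hi]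

lemma lbStat_append_replicate (w : List ℕ) (k c : ℕ) :
    lbStat (w ++ List.replicate k c) = lbStat w + k * (w.toFinset.filter (fun v => c < v)).card := by
  induction k with
  | zero => simp
  | succ k ih =>
    have hfilter : ((w ++ List.replicate k c).toFinset.filter (fun v => c < v)) =
        w.toFinset.filter (fun v => c < v) := by
      ext v
      simp only [Finset.mem_filter, List.mem_toFinset, List.mem_append, List.mem_replicate]
      grind
    rw [List.replicate_succ', ← List.append_assoc, lbStat_append_singleton, ih, hfilter]
    ring

lemma lbStat_range' (s m : ℕ) : lbStat (List.range' s m) = 0 := by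
  induction m with
  | zero => rfl
  | succ m ih =>
    rw [List.range'_concat, lbStat_append_singleton, ih, zero_add, Finset.card_eq_zero,
      Finset.filter_eq_empty_iff]
    intro v hv
    simp only [List.mem_toFinset, List.mem_range'_1] at hv
    omega

lemma rsStat_cons (x : ℕ) (w : List ℕ) :
    rsStat (x :: w) = (w.toFinset.filter (fun v => v < x)).card + rsStat w := by
  simp only [rsStat, List.length_cons, Fin.sum_univ_succ]
  rfl

lemma rsStat_range'_append (s m : ℕ) (u : List ℕ) :
    rsStat (List.range' s m ++ u) =
      ∑ i ∈ Finset.range m, (u.toFinset.filter (fun v => v < s + i)).card + rsStat u := by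
  induction m generalizing s with
  | zero => simp
  | succ m ih =>
    have hfilter : ((List.range' (s + 1) m ++ u).toFinset.filter (fun v => v < s)) =
        u.toFinset.filter (fun v => v < s) := by
      ext v
      simp only [Finset.mem_filter, List.mem_toFinset, List.mem_append, List.mem_range'_1]
      grind
    rw [List.range'_succ, List.cons_append, rsStat_cons, ih, hfilter, Finset.sum_range_succ']
    simp only [Nat.add_zero, add_assoc, add_comm 1]
    omega

lemma rsStat_replicate (k c : ℕ) : rsStat (List.replicate k c) = 0 := by
  induction k with
  | zero => rfl
  | succ k ih =>
    rw [List.replicate_succ, rsStat_cons, ih, add_zero, Finset.card_eq_zero,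
      Finset.filter_eq_empty_iff]
    simp

theorem stmt16_general (m k : ℕ) :
    (1 ≤ k →
      lbStat (List.range' 1 m ++ List.replicate k 1) = (m - 1) * k ∧
      rsStat (List.range' 1 m ++ List.replicate k 1) = m - 1) ∧
    (lbStat (List.range' 1 m ++ List.replicate k m) = 0 ∧
      rsStat (List.range' 1 m ++ List.replicate k m) = 0) := by
  refine ⟨fun hk => ⟨?_, ?_⟩, ?_, ?_⟩
  · have hbigger : (Finset.Icc 1 m).filter (fun v => 1 < v) = Finset.Ioc 1 m := by
      ext v
      simp only [Finset.mem_filter, Finset.mem_Icc, Finset.mem_Ioc]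
      omega
    rw [lbStat_append_replicate, lbStat_range', List.toFinset_range'_1_1, hbigger, Nat.card_Ioc,
      zero_add, mul_comm]
  · have hsmaller (i : ℕ) : (({1} : Finset ℕ).filter (fun v => v < 1 + i)).card =
        if 0 < i then 1 else 0 := by
      rw [Finset.filter_singleton]
      split_ifs <;> simp_all
    rw [rsStat_range'_append, rsStat_replicate, add_zero,
      List.toFinset_replicate_of_ne_zero (Nat.one_le_iff_ne_zero.mp hk)]
    have hpositive : (Finset.range m).filter (fun i => 0 < i) = Finset.Ico 1 m := by
      ext i
      simp only [Finset.mem_filter, Finset.mem_range, Finset.mem_Ico]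
      omega
    simp only [hsmaller, Finset.sum_boole, hpositive, Nat.card_Ico, Nat.cast_id]
  · rw [lbStat_append_replicate, lbStat_range', List.toFinset_range'_1_1]
    simp
  · rw [rsStat_range'_append, rsStat_replicate, add_zero]
    refine Finset.sum_eq_zero fun i hi => ?_
    rw [Finset.card_eq_zero, Finset.filter_eq_empty_iff]
    simp only [List.mem_toFinset, List.mem_replicate, Finset.mem_range] at hi ⊢
    omega

theorem stmt16 (m k : ℕ) (hm : 1 ≤ m) :
    (1 ≤ k →
      lbStat (List.range' 1 m ++ List.replicate k 1) = (m - 1) * k ∧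
      rsStat (List.range' 1 m ++ List.replicate k 1) = m - 1) ∧
    (lbStat (List.range' 1 m ++ List.replicate k m) = 0 ∧
      rsStat (List.range' 1 m ++ List.replicate k m) = 0) :=
  stmt16_general m k
end
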